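/- Let S ⊆ ℝⁿ be convex and compact with diameter diam_p(S) = max_{x,y∈S} ‖x−y‖_p, f differentiable, h convex, λ > 0, p > 1 with conjugate q. Define U(x; z) = f(z) + ∇f(z)ᵀ(x − z) + (λ/2)‖x − z‖_p^p + h(x), let z_U minimize U(·; z) over S, and ΔU_z = U(z; z) − U(z_U; z). If ΔU_z ≤ (1/2)(ε/(diam_p(S) λ^{1/p}))^q and ε ≤ diam_p(S)^p λ, then z is an ε-stationary point: ∇f(z)ᵀ(y − z) + h(y) − h(z) ≥ −ε for all y ∈ S. -/

import Mathlib

/-!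
Testing the minimality of `z_U` against the point `z + α (y - z)` of the segment `[z, y] ⊆ S`
and using the convexity of `h` gives, for every `α ∈ [0, 1]`,
`-α (⟪∇f z, y - z⟫ + h y - h z) ≤ ΔU_z + (λ/2) α^p diam_p(S)^p`.
For `ε > 0` the step `α = (ε / (λ diam_p(S)^p))^(1/(p-1)) ≤ 1` makes the last term `ε α / 2`,
and since `q = p / (p - 1)` the hypothesis on `ΔU_z` reads `ΔU_z ≤ ε α / 2`; dividing by `α`
gives the claim. For `ε = 0` the hypothesis says `ΔU_z ≤ 0`, and one lets `α → 0` instead.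
-/

open scoped RealInnerProductSpace

noncomputable def lpNorm {n : ℕ} (p : ℝ) (x : EuclideanSpace ℝ (Fin n)) : ℝ :=
  (∑ i, |x i| ^ p) ^ (1 / p)

open Set Filter Topology

section lpNorm

variable {n : ℕ} {p : ℝ}

lemma lpNorm_nonneg (x : EuclideanSpace ℝ (Fin n)) : 0 ≤ lpNorm p x :=
  Real.rpow_nonneg (Finset.sum_nonneg fun _ _ => Real.rpow_nonneg (abs_nonneg _) _) _

lemma lpNorm_smul (hp : p ≠ 0) {a : ℝ} (ha : 0 ≤ a) (x : EuclideanSpace ℝ (Fin n)) :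
    lpNorm p (a • x) = a * lpNorm p x := by
  have hsum : ∑ i, |(a • x) i| ^ p = a ^ p * ∑ i, |x i| ^ p := by
    simp only [Finset.mul_sum, PiLp.smul_apply, smul_eq_mul, abs_mul, abs_of_nonneg ha,
      Real.mul_rpow ha (abs_nonneg _)]
  rw [lpNorm, lpNorm, hsum, Real.mul_rpow (Real.rpow_nonneg ha p)
    (Finset.sum_nonneg fun _ _ => Real.rpow_nonneg (abs_nonneg _) _), ← Real.rpow_mul ha,
    mul_one_div_cancel hp, Real.rpow_one]

lemma lpNorm_zero (hp : p ≠ 0) : lpNorm p (0 : EuclideanSpace ℝ (Fin n)) = 0 := by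
  simpa using lpNorm_smul hp le_rfl (0 : EuclideanSpace ℝ (Fin n))

end lpNorm

section proxModel

variable {E : Type*} [NormedAddCommGroup E] [InnerProductSpace ℝ E]

/-- The model `U(x; z)` of the paper, with the regularizer `r = (λ/2)‖·‖_p^p` left abstract. -/
def proxModel (f h : E → ℝ) (g : E) (r : E → ℝ) (z x : E) : ℝ :=
  f z + ⟪g, x - z⟫ + r (x - z) + h x

lemma neg_mul_le_proxModel_sub {S : Set E} (hS : Convex ℝ S) {f h r : E → ℝ}
    (hh : ConvexOn ℝ S h) {g z zU y : E} (hz : z ∈ S) (hy : y ∈ S)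
    (hmin : IsMinOn (proxModel f h g r z) S zU) {α : ℝ} (hα₀ : 0 ≤ α) (hα₁ : α ≤ 1) :
    -(α * (⟪g, y - z⟫ + h y - h z)) ≤
      proxModel f h g r z z - proxModel f h g r z zU + r (α • (y - z)) - r 0 := by
  have hseg : (1 - α) • z + α • y - z = α • (y - z) := by module
  have hmodel := hmin (hS hz hy (sub_nonneg.2 hα₁) hα₀ (sub_add_cancel 1 α))
  have hconv := hh.2 hz hy (sub_nonneg.2 hα₁) hα₀ (sub_add_cancel 1 α)
  simp only [mem_ofPred_eq, proxModel, hseg, inner_smul_right, smul_eq_mul] at hmodel hconv ⊢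
  simp only [sub_self, inner_zero_right]
  linarith

end proxModel

lemma nonneg_of_forall_neg_mul_le_rpow {p C φ : ℝ} (hp : 1 < p)
    (h : ∀ α, 0 < α → α ≤ 1 → -(α * φ) ≤ C * α ^ p) : 0 ≤ φ := by
  have hlim : Tendsto (fun α : ℝ => C * α ^ (p - 1)) (𝓝[>] 0) (𝓝 0) := by
    have hcont := (Real.continuousAt_rpow_const 0 (p - 1) (Or.inr (by linarith))).const_mul C
    simpa [Real.zero_rpow (by linarith : p - 1 ≠ 0)]
      using hcont.tendsto.mono_left nhdsWithin_le_nhds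
  have hev : ∀ᶠ α in 𝓝[>] (0 : ℝ), -φ ≤ C * α ^ (p - 1) := by
    filter_upwards [Ioo_mem_nhdsGT (zero_lt_one' ℝ)] with α ⟨hα₀, hα₁⟩
    rw [← mul_le_mul_iff_right₀ hα₀]
    calc α * -φ = -(α * φ) := by ring
      _ ≤ C * α ^ p := h α hα₀ hα₁.le
      _ = α * (C * α ^ (p - 1)) := by
        rw [← mul_left_comm, ← Real.rpow_one_add' hα₀.le (by linarith)]; ring_nf
  linarith [ge_of_tendsto hlim hev]

lemma rpow_div_mul_rpow_one_div {p q ε lam D : ℝ} (hpq : p.HolderConjugate q) (hε : 0 < ε)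
    (hlam : 0 < lam) (hD : 0 < D) :
    (ε / (D * lam ^ (1 / p))) ^ q = ε * (ε / (lam * D ^ p)) ^ (1 / (p - 1)) := by
  have hp₁ := hpq.sub_one_pos
  have hp := hpq.ne_zero
  apply Real.log_injOn_pos (mem_Ioi.2 (by positivity)) (mem_Ioi.2 (by positivity))
  rw [Real.log_rpow (by positivity), Real.log_mul hε.ne' (by positivity),
    Real.log_rpow (by positivity), Real.log_div hε.ne' (by positivity),
    Real.log_div hε.ne' (by positivity), Real.log_mul hD.ne' (by positivity),
    Real.log_mul hlam.ne' (by positivity), Real.log_rpow hlam, Real.log_rpow hD, hpq.conjugate_eq]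
  field_simp
  ring

lemma neg_le_of_forall_neg_mul_le {p q lam D ε φ Δ : ℝ} (hpq : p.HolderConjugate q)
    (hlam : 0 < lam) (hD : 0 ≤ D) (hε : 0 < ε) (hεD : ε ≤ D ^ p * lam)
    (hdesc : ∀ α, 0 ≤ α → α ≤ 1 → -(α * φ) ≤ Δ + lam / 2 * (α ^ p * D ^ p))
    (hΔ : Δ ≤ 1 / 2 * (ε / (D * lam ^ (1 / p))) ^ q) : -ε ≤ φ := by
  have hp₁ := hpq.sub_one_pos
  have hDpos : 0 < D := by
    refine hD.lt_of_ne fun hD₀ => ?_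
    rw [← hD₀, Real.zero_rpow hpq.ne_zero, zero_mul] at hεD
    linarith
  set c := lam * D ^ p with hc
  have hc₀ : 0 < c := by positivity
  set α := (ε / c) ^ (1 / (p - 1)) with hα
  have hα₀ : 0 < α := by positivity
  have hα₁ : α ≤ 1 :=
    Real.rpow_le_one (by positivity) ((div_le_one hc₀).2 (by linarith)) (by positivity)
  have hαp : c * α ^ p = ε * α := by
    have : α ^ (p - 1) = ε / c := by
      rw [hα, ← Real.rpow_mul (by positivity), one_div_mul_cancel hp₁.ne', Real.rpow_one]
    rw [Real.rpow_sub_one hα₀.ne', div_eq_div_iff hα₀.ne' hc₀.ne'] at this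
    linarith
  have hΔα : Δ ≤ ε * α / 2 := by
    rw [rpow_div_mul_rpow_one_div hpq hε hlam hDpos] at hΔ
    linarith
  have key : α * -ε ≤ α * φ := by
    rw [hc] at hαp
    linarith [hdesc α hα₀.le hα₁]
  linarith [(mul_le_mul_iff_right₀ hα₀).1 key]

theorem stmt_9_general {n : ℕ} {S : Set (EuclideanSpace ℝ (Fin n))}
    (hS : Convex ℝ S)
    {f h : EuclideanSpace ℝ (Fin n) → ℝ} {g : EuclideanSpace ℝ (Fin n) → EuclideanSpace ℝ (Fin n)}
    (hh : ConvexOn ℝ Set.univ h)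
    {p q lam : ℝ} (hp : 1 < p) (hpq : 1 / p + 1 / q = 1) (hlam : 0 < lam)
    {D : ℝ} (hD : IsGreatest {d : ℝ | ∃ u ∈ S, ∃ v ∈ S, d = lpNorm p (u - v)} D)
    {z zU : EuclideanSpace ℝ (Fin n)} (hz : z ∈ S)
    (hmin : IsMinOn (fun x => f z + ⟪g z, x - z⟫ + lam / 2 * lpNorm p (x - z) ^ p + h x) S zU)
    {eps : ℝ} (heps0 : 0 ≤ eps) (heps : eps ≤ D ^ p * lam)
    (hΔ : (f z + ⟪g z, z - z⟫ + lam / 2 * lpNorm p (z - z) ^ p + h z)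
            - (f z + ⟪g z, zU - z⟫ + lam / 2 * lpNorm p (zU - z) ^ p + h zU)
          ≤ 1 / 2 * (eps / (D * lam ^ (1 / p))) ^ q) :
    ∀ y ∈ S, ⟪g z, y - z⟫ + h y - h z ≥ -eps := by
  have hpq' : p.HolderConjugate q :=
    Real.holderConjugate_iff.2 ⟨hp, by simpa only [one_div] using hpq⟩
  have hp₀ := hpq'.ne_zero
  have hD₀ : 0 ≤ D := (lpNorm_nonneg _).trans (hD.2 ⟨z, hz, z, hz, rfl⟩)
  intro y hy
  set U := proxModel f h (g z) (fun w => lam / 2 * lpNorm p w ^ p) z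
  have hdesc (α : ℝ) (hα₀ : 0 ≤ α) (hα₁ : α ≤ 1) :
      -(α * (⟪g z, y - z⟫ + h y - h z)) ≤ U z - U zU + lam / 2 * (α ^ p * D ^ p) := by
    have hdecr := neg_mul_le_proxModel_sub hS (hh.subset (subset_univ S) hS) hz hy
      (show IsMinOn U S zU from hmin) hα₀ hα₁
    have hdiam : lpNorm p (y - z) ^ p ≤ D ^ p :=
      Real.rpow_le_rpow (lpNorm_nonneg _) (hD.2 ⟨y, hy, z, hz, rfl⟩) hpq'.nonneg
    simp only [lpNorm_smul hp₀ hα₀, Real.mul_rpow hα₀ (lpNorm_nonneg _), lpNorm_zero hp₀,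
      Real.zero_rpow hp₀, mul_zero, sub_zero] at hdecr
    change _ ≤ U z - U zU + _ at hdecr
    exact hdecr.trans (by gcongr)
  rcases heps0.eq_or_lt with rfl | hε
  · rw [zero_div, Real.zero_rpow hpq'.symm.ne_zero, mul_zero] at hΔ
    have hU : U z - U zU ≤ 0 := hΔ
    rw [neg_zero, ge_iff_le]
    exact nonneg_of_forall_neg_mul_le_rpow hp (C := lam / 2 * D ^ p) fun α hα₀ hα₁ => by
      linarith [hdesc α hα₀.le hα₁]
  · exact neg_le_of_forall_neg_mul_le hpq' hlam hD₀ hε heps hdesc hΔ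

theorem stmt_9 {n : ℕ} {S : Set (EuclideanSpace ℝ (Fin n))}
    (hS : Convex ℝ S) (hScpt : IsCompact S)
    {f h : EuclideanSpace ℝ (Fin n) → ℝ} {g : EuclideanSpace ℝ (Fin n) → EuclideanSpace ℝ (Fin n)}
    (hf : ∀ x, HasGradientAt f (g x) x)
    (hh : ConvexOn ℝ Set.univ h)
    {p q lam : ℝ} (hp : 1 < p) (hpq : 1 / p + 1 / q = 1) (hlam : 0 < lam)
    {D : ℝ} (hD : IsGreatest {d : ℝ | ∃ u ∈ S, ∃ v ∈ S, d = lpNorm p (u - v)} D)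
    {z zU : EuclideanSpace ℝ (Fin n)} (hz : z ∈ S) (hzU : zU ∈ S)
    (hmin : IsMinOn (fun x => f z + ⟪g z, x - z⟫ + lam / 2 * lpNorm p (x - z) ^ p + h x) S zU)
    {eps : ℝ} (heps0 : 0 ≤ eps) (heps : eps ≤ D ^ p * lam)
    (hΔ : (f z + ⟪g z, z - z⟫ + lam / 2 * lpNorm p (z - z) ^ p + h z)
            - (f z + ⟪g z, zU - z⟫ + lam / 2 * lpNorm p (zU - z) ^ p + h zU)
          ≤ 1 / 2 * (eps / (D * lam ^ (1 / p))) ^ q) :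
    ∀ y ∈ S, ⟪g z, y - z⟫ + h y - h z ≥ -eps :=
  stmt_9_general hS hh hp hpq hlam hD hz hmin heps0 heps hΔ
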